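/- For every ρ > 0 and every t ∈ ℝ, μ_ρ[ e^{ t (c(η) − α) } ] ≤ exp( α a₁ t² e^{a₁ |t|} ), where α = α(ρ), the expectation is with respect to the one-site grand canonical measure μ_ρ on ℕ, and a₁ is the constant of Condition (LG). -/

import Mathlib

/-!
Write `w k = α^k / c(k)!` and `F s = ∑ₖ w k e^{s(c k - α)}`. The relation `c(k+1) w(k+1) = α w(k)`
turns `F' s = ∑ₖ (c k - α) w k e^{s(c k - α)}` into `α ∑ₖ w k (e^{s(c(k+1) - α)} - e^{s(c k - α)})`,
and by (LG) each difference is at most `a₁|s|e^{a₁|s|} e^{s(c k - α)}`. Hence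
`|(log F)'| ≤ α a₁ |t| e^{a₁|t|}` between `0` and `t`, so `F t ≤ F 0 · exp(α a₁ t² e^{a₁|t|})`
with `F 0 = Z(α)`. Condition (M) forces `c k → ∞`, which makes all these series converge.
-/

open scoped BigOperators

noncomputable section

/-- `cfact c k = c(k)! = c(1)⋯c(k)`, with `cfact c 0 = 1`. -/
def cfact (c : ℕ → ℝ) : ℕ → ℝ
  | 0 => 1
  | k + 1 => cfact c k * c (k + 1)

/-- The configuration obtained from `η` by moving one particle from `x` to `y` (`x ≠ y`),
i.e. `η - δ^x + δ^y`. -/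
def move (η : ℤ → ℕ) (x y : ℤ) : ℤ → ℕ :=
  fun z => if z = x then η x - 1 else if z = y then η y + 1 else η z

/-- Unnormalized weight of the canonical measure `ν_Λ^N` on configurations supported in `Λ`
with `N` particles: `∏_{x∈Λ} 1/c(η_x)!`. -/
def nuW (c : ℕ → ℝ) (Λ : Finset ℤ) (N : ℕ) : (ℤ → ℕ) → ℝ :=
  Set.indicator {η : ℤ → ℕ | (∀ x, x ∉ Λ → η x = 0) ∧ (∑ x ∈ Λ, η x) = N}
    (fun η => ∏ x ∈ Λ, (cfact c (η x))⁻¹)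

/-- Expectation with respect to the probability measure obtained by normalizing the
nonnegative weight `w`. -/
def wE (w f : (ℤ → ℕ) → ℝ) : ℝ :=
  (∑' η : ℤ → ℕ, w η * f η) / (∑' η : ℤ → ℕ, w η)

/-- Covariance `μ[f,g] = μ[f g] - μ[f] μ[g]`. -/
def wCov (w f g : (ℤ → ℕ) → ℝ) : ℝ :=
  wE w (fun η => f η * g η) - wE w f * wE w g

/-- Entropy `Ent_μ(f) = μ[f log f] - μ[f] log μ[f]` (note `Real.log 0 = 0`, giving the
convention `0 log 0 = 0`). -/
def wEnt (w f : (ℤ → ℕ) → ℝ) : ℝ :=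
  wE w (fun η => f η * Real.log (f η)) - wE w f * Real.log (wE w f)

/-- Dirichlet form of the zero-range process on `Λ`:
`E(f,g) = (1/2) Σ_{x∈Λ} Σ_{y∈Λ, |x-y|=1} μ[c(η_x) ∂_{xy}f ∂_{xy}g]`. -/
def wDir (c : ℕ → ℝ) (Λ : Finset ℤ) (w f g : (ℤ → ℕ) → ℝ) : ℝ :=
  wE w (fun η => (1 / 2) * ∑ x ∈ Λ, ∑ y ∈ Λ,
    if |x - y| = 1 then c (η x) * ((f (move η x y) - f η) * (g (move η x y) - g η)) else 0)

/-- Weight conditioned on the event `∑_{x ∈ Λ₁} η x = n`. -/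
def condW (w : (ℤ → ℕ) → ℝ) (Λ₁ : Finset ℤ) (n : ℕ) : (ℤ → ℕ) → ℝ :=
  Set.indicator {η : ℤ → ℕ | (∑ x ∈ Λ₁, η x) = n} w

/-- `h(n) = (n+1)/c(n+1)`. -/
def hfun (c : ℕ → ℝ) (n : ℕ) : ℝ := (n + 1) / c (n + 1)

/-- Grand canonical partition function `Z(α) = Σ_k α^k / c(k)!`. -/
def Zfun (c : ℕ → ℝ) (α : ℝ) : ℝ := ∑' k : ℕ, α ^ k / cfact c k

/-- Mean particle number per site under the grand canonical measure with fugacity `α`. -/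
def meanGC (c : ℕ → ℝ) (α : ℝ) : ℝ :=
  (∑' k : ℕ, (k : ℝ) * α ^ k / cfact c k) / Zfun c α

open Real Filter Set

lemma cfact_pos {c : ℕ → ℝ} (hcpos : ∀ n, 0 < n → 0 < c n) : ∀ k, 0 < cfact c k
  | 0 => one_pos
  | k + 1 => mul_pos (cfact_pos hcpos k) (hcpos _ k.succ_pos)

lemma le_mul_of_abs_sub_succ_le {c : ℕ → ℝ} {a : ℝ} (hc0 : c 0 = 0)
    (hLG : ∀ k, |c (k + 1) - c k| ≤ a) (k : ℕ) : c k ≤ a * k := by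
  induction k with
  | zero => simp [hc0]
  | succ n ih => push_cast; linarith [(abs_le.1 (hLG n)).2]

lemma tendsto_atTop_of_le_sub {c : ℕ → ℝ} {a : ℝ} {k₀ : ℕ} (hc : ∀ k, 0 ≤ c k) (ha : 0 < a)
    (hM : ∀ j k, j + k₀ ≤ k → a ≤ c k - c j) : Tendsto c atTop atTop := by
  have hgrow : ∀ m j : ℕ, m * a ≤ c (j + m * k₀) := by
    intro m j
    induction m with
    | zero => simpa using hc j
    | succ m ih =>
      have := hM (j + m * k₀) (j + (m + 1) * k₀) (by rw [Nat.succ_mul]; omega)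
      push_cast
      linarith
  refine tendsto_atTop.2 fun b => eventually_atTop.2 ⟨⌈b / a⌉₊ * k₀, fun k hk => ?_⟩
  calc b ≤ ⌈b / a⌉₊ * a := (div_le_iff₀ ha).1 (Nat.le_ceil _)
    _ ≤ c (k - ⌈b / a⌉₊ * k₀ + ⌈b / a⌉₊ * k₀) := hgrow _ _
    _ = c k := by rw [Nat.sub_add_cancel hk]

lemma summable_pow_div_cfact {c : ℕ → ℝ} (hcpos : ∀ n, 0 < n → 0 < c n)
    (hc : Tendsto c atTop atTop) (x : ℝ) : Summable fun k => x ^ k / cfact c k := by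
  refine summable_of_ratio_norm_eventually_le (r := 1 / 2) (by norm_num) ?_
  filter_upwards [((tendsto_add_atTop_iff_nat 1).2 hc).eventually_ge_atTop (2 * |x|)] with k hk
  have hc1 : 0 < c (k + 1) := hcpos _ k.succ_pos
  have hratio : ‖x / c (k + 1)‖ ≤ 1 / 2 := by
    rw [norm_div, Real.norm_eq_abs, Real.norm_eq_abs, abs_of_pos hc1, div_le_iff₀ hc1]
    linarith
  rw [cfact, pow_succ, mul_div_mul_comm, norm_mul, mul_comm (1 / 2 : ℝ)]
  exact mul_le_mul_of_nonneg_left hratio (norm_nonneg _)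

lemma abs_exp_sub_one_le_mul_exp_abs (x : ℝ) : |exp x - 1| ≤ |x| * exp |x| := by
  rcases le_total 0 x with hx | hx
  · -- `exp x - 1 ≤ x exp x` is `1 - x ≤ exp (-x)` multiplied by `exp x`
    have h := mul_le_mul_of_nonneg_right (add_one_le_exp (-x)) (exp_pos x).le
    rw [← exp_add, neg_add_cancel, exp_zero] at h
    rw [abs_of_nonneg hx, abs_of_nonneg (by linarith [add_one_le_exp x])]
    linarith
  · rw [abs_of_nonpos hx, abs_of_nonpos (by linarith [exp_le_one_iff.2 hx])]
    nlinarith [add_one_le_exp x, one_le_exp (neg_nonneg.2 hx)]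

lemma abs_mul_mul_exp_le {x y p R : ℝ} (hp : 0 ≤ p) (hy : |y| ≤ R) :
    |x * (p * exp (y * x))| ≤ p * exp ((R + 1) * |x|) := by
  have hyx : y * x ≤ R * |x| :=
    (le_abs_self _).trans (by rw [abs_mul]; exact mul_le_mul_of_nonneg_right hy (abs_nonneg x))
  calc |x * (p * exp (y * x))| = |x| * (p * exp (y * x)) := by
        rw [abs_mul, abs_of_nonneg (mul_nonneg hp (exp_pos _).le)]
    _ ≤ exp |x| * (p * exp (R * |x|)) := by
        gcongr
        linarith [add_one_le_exp |x|]
    _ = p * exp ((R + 1) * |x|) := by rw [add_mul, one_mul, exp_add]; ring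

section ExpMoments

variable {p X : ℕ → ℝ}

lemma summable_mul_exp_mul_abs (hp : ∀ k, 0 ≤ p k)
    (hsum : ∀ r, Summable fun k => p k * exp (r * X k)) (r : ℝ) :
    Summable fun k => p k * exp (r * |X k|) := by
  refine ((hsum r).add (hsum (-r))).of_nonneg_of_le
    (fun k => mul_nonneg (hp k) (exp_pos _).le) fun k => ?_
  rw [← mul_add]
  refine mul_le_mul_of_nonneg_left ?_ (hp k)
  rcases abs_choice (X k) with h | h <;> rw [h] <;> simp only [mul_neg, neg_mul] <;>
    linarith [exp_pos (r * X k), exp_pos (-(r * X k))]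

lemma hasDerivAt_tsum_mul_exp (hp : ∀ k, 0 ≤ p k)
    (hsum : ∀ r, Summable fun k => p k * exp (r * X k)) (s : ℝ) :
    HasDerivAt (fun s => ∑' k, p k * exp (s * X k)) (∑' k, X k * (p k * exp (s * X k))) s := by
  have hball : ∀ y ∈ Ioo (s - 1) (s + 1), |y| ≤ |s| + 1 := fun y hy => by
    rw [abs_le]; constructor <;> linarith [hy.1, hy.2, neg_abs_le s, le_abs_self s]
  have hterm : ∀ k y, HasDerivAt (fun s => p k * exp (s * X k)) (X k * (p k * exp (y * X k))) y :=
    fun k y => ((hasDerivAt_mul_const (x := y) (X k)).exp.const_mul (p k)).congr_deriv (by ring)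
  have hs : s ∈ Ioo (s - 1) (s + 1) := ⟨by linarith, by linarith⟩
  exact hasDerivAt_tsum_of_isPreconnected
    (summable_mul_exp_mul_abs hp hsum (|s| + 1 + 1)) isOpen_Ioo isPreconnected_Ioo
    (fun k y _ => hterm k y) (fun k y hy => abs_mul_mul_exp_le (hp k) (hball y hy))
    hs (hsum s) hs

end ExpMoments

lemma le_mul_exp_of_abs_deriv_le {F F' : ℝ → ℝ} {K T t : ℝ}
    (hF : ∀ s ∈ Icc (-T) T, HasDerivAt F (F' s) s) (hpos : ∀ s ∈ Icc (-T) T, 0 < F s)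
    (hbound : ∀ s ∈ Icc (-T) T, |F' s| ≤ K * F s) (ht : |t| ≤ T) :
    F t ≤ F 0 * exp (K * |t|) := by
  have h0 : (0 : ℝ) ∈ Icc (-T) T := ⟨by linarith [abs_nonneg t], by linarith [abs_nonneg t]⟩
  have ht' : t ∈ Icc (-T) T := abs_le.1 ht
  have hlog : |log (F t) - log (F 0)| ≤ K * |t - 0| :=
    (convex_Icc (-T) T).norm_image_sub_le_of_norm_hasDerivWithin_le
      (fun s hs => ((hF s hs).log (hpos s hs).ne').hasDerivWithinAt)
      (fun s hs => by
        rw [Real.norm_eq_abs, abs_div, abs_of_pos (hpos s hs), div_le_iff₀ (hpos s hs)]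
        exact hbound s hs) h0 ht'
  rw [sub_zero] at hlog
  calc F t = exp (log (F t)) := (exp_log (hpos t ht')).symm
    _ ≤ exp (log (F 0) + K * |t|) := exp_le_exp.2 (by linarith [(abs_le.1 hlog).2])
    _ = F 0 * exp (K * |t|) := by rw [exp_add, exp_log (hpos 0 h0)]

/-- `gcWeight c α k / Zfun c α` is the grand canonical probability `μ_ρ[{k}]` at fugacity `α`. -/
def gcWeight (c : ℕ → ℝ) (α : ℝ) (k : ℕ) : ℝ := α ^ k / cfact c k

section GrandCanonical

variable {c : ℕ → ℝ} {α : ℝ}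

lemma gcWeight_nonneg (hcpos : ∀ n, 0 < n → 0 < c n) (hα : 0 ≤ α) (k : ℕ) :
    0 ≤ gcWeight c α k :=
  div_nonneg (pow_nonneg hα k) (cfact_pos hcpos k).le

lemma c_succ_mul_gcWeight_succ (hcpos : ∀ n, 0 < n → 0 < c n) (k : ℕ) :
    c (k + 1) * gcWeight c α (k + 1) = α * gcWeight c α k := by
  have := (hcpos _ k.succ_pos).ne'
  have := (cfact_pos hcpos k).ne'
  simp only [gcWeight, cfact, pow_succ]
  field_simp

lemma summable_gcWeight_mul_exp {a : ℝ} (hcpos : ∀ n, 0 < n → 0 < c n) (hc : ∀ k, 0 ≤ c k)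
    (hca : ∀ k, c k ≤ a * k) (htend : Tendsto c atTop atTop) (r : ℝ) :
    Summable fun k => gcWeight c α k * exp (r * (c k - α)) := by
  refine ((summable_pow_div_cfact hcpos htend (|α| * exp (|r| * a))).mul_left
    (exp (-(r * α)))).of_norm_bounded fun k => ?_
  have hexp : exp (r * c k) ≤ exp (|r| * a) ^ k := by
    rw [← exp_nat_mul]
    refine exp_le_exp.2 ?_
    calc r * c k ≤ |r| * c k := mul_le_mul_of_nonneg_right (le_abs_self r) (hc k)
      _ ≤ |r| * (a * k) := mul_le_mul_of_nonneg_left (hca k) (abs_nonneg r)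
      _ = k * (|r| * a) := by ring
  calc ‖gcWeight c α k * exp (r * (c k - α))‖
        = |α| ^ k / cfact c k * exp (r * c k) * exp (-(r * α)) := by
          rw [gcWeight, norm_mul, norm_div, norm_pow, Real.norm_eq_abs, Real.norm_eq_abs,
            Real.norm_eq_abs, abs_of_pos (cfact_pos hcpos k), abs_of_pos (exp_pos _), mul_sub,
            sub_eq_add_neg, exp_add]
          ring
    _ ≤ |α| ^ k / cfact c k * exp (|r| * a) ^ k * exp (-(r * α)) := by
          gcongr
          exact div_nonneg (by positivity) (cfact_pos hcpos k).le
    _ = exp (-(r * α)) * ((|α| * exp (|r| * a)) ^ k / cfact c k) := by rw [mul_pow]; ring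

lemma abs_tsum_sub_mul_gcWeight_le (hc0 : c 0 = 0) (hcpos : ∀ n, 0 < n → 0 < c n)
    (hα : 0 ≤ α) {f : ℕ → ℝ} {δ : ℝ} (hsum : Summable fun k => gcWeight c α k * f k)
    (hsum_c : Summable fun k => c k * (gcWeight c α k * f k))
    (hδ : ∀ k, |f (k + 1) - f k| ≤ δ * f k) :
    |∑' k, (c k - α) * (gcWeight c α k * f k)| ≤ α * δ * ∑' k, gcWeight c α k * f k := by
  -- `c (k+1) w (k+1) = α w k` shifts the `c`-weighted sum by one site
  have hshift : HasSum (fun k => α * (gcWeight c α k * f (k + 1)))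
      (∑' k, c k * (gcWeight c α k * f k)) := by
    simpa [hc0, ← mul_assoc, c_succ_mul_gcWeight_succ hcpos] using
      (hasSum_nat_add_iff' 1).2 hsum_c.hasSum
  have hsplit : ∑' k, (c k - α) * (gcWeight c α k * f k)
      = ∑' k, c k * (gcWeight c α k * f k) - α * ∑' k, gcWeight c α k * f k := by
    rw [← tsum_mul_left, ← hsum_c.tsum_sub (hsum.mul_left α)]
    exact tsum_congr fun k => by ring
  have hdiff : HasSum (fun k => α * (gcWeight c α k * (f (k + 1) - f k)))
      (∑' k, (c k - α) * (gcWeight c α k * f k)) := by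
    rw [hsplit]
    exact (hshift.sub (hsum.hasSum.mul_left α)).congr_fun fun k => by ring
  rw [← hdiff.tsum_eq, ← Real.norm_eq_abs]
  refine tsum_of_norm_bounded (hsum.hasSum.mul_left (α * δ)) fun k => ?_
  have hw := gcWeight_nonneg hcpos hα k
  rw [Real.norm_eq_abs, abs_mul, abs_mul, abs_of_nonneg hα, abs_of_nonneg hw]
  calc α * (gcWeight c α k * |f (k + 1) - f k|) ≤ α * (gcWeight c α k * (δ * f k)) := by
        gcongr; exact hδ k
    _ = α * δ * (gcWeight c α k * f k) := by ring

lemma abs_tsum_sub_mul_gcWeight_mul_exp_le {a : ℝ} (hc0 : c 0 = 0)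
    (hcpos : ∀ n, 0 < n → 0 < c n) (hLG : ∀ k, |c (k + 1) - c k| ≤ a) (hα : 0 ≤ α)
    (hsum : ∀ r, Summable fun k => gcWeight c α k * exp (r * (c k - α))) (s : ℝ) :
    |∑' k, (c k - α) * (gcWeight c α k * exp (s * (c k - α)))|
      ≤ α * (a * |s| * exp (a * |s|)) * ∑' k, gcWeight c α k * exp (s * (c k - α)) := by
  have hw := gcWeight_nonneg hcpos hα
  have ha : 0 ≤ a := (abs_nonneg _).trans (hLG 0)
  have hsum_X : Summable fun k => (c k - α) * (gcWeight c α k * exp (s * (c k - α))) :=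
    (summable_mul_exp_mul_abs hw hsum (|s| + 1)).of_norm_bounded
      fun k => abs_mul_mul_exp_le (hw k) le_rfl
  refine abs_tsum_sub_mul_gcWeight_le hc0 hcpos hα (hsum s)
    ((hsum_X.add ((hsum s).mul_left α)).congr fun k => by ring) fun k => ?_
  have hstep : |s * (c (k + 1) - c k)| ≤ a * |s| := by
    rw [abs_mul, mul_comm a]
    exact mul_le_mul_of_nonneg_left (hLG k) (abs_nonneg s)
  have hsplit : s * (c (k + 1) - α) = s * (c k - α) + s * (c (k + 1) - c k) := by ring
  calc |exp (s * (c (k + 1) - α)) - exp (s * (c k - α))|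
        = exp (s * (c k - α)) * |exp (s * (c (k + 1) - c k)) - 1| := by
          rw [hsplit, exp_add, ← mul_sub_one, abs_mul, abs_of_pos (exp_pos _)]
    _ ≤ exp (s * (c k - α)) * (a * |s| * exp (a * |s|)) := by
          gcongr
          exact (abs_exp_sub_one_le_mul_exp_abs _).trans (by gcongr)
    _ = a * |s| * exp (a * |s|) * exp (s * (c k - α)) := mul_comm _ _

end GrandCanonical

theorem statement16_general
    (c : ℕ → ℝ) (a₁ a₂ : ℝ) (k₀ : ℕ)
    (hc0 : c 0 = 0) (hcpos : ∀ n : ℕ, 0 < n → 0 < c n)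
    (hLG : ∀ k : ℕ, |c (k + 1) - c k| ≤ a₁)
    (ha₂ : 0 < a₂)
    (hM : ∀ j k : ℕ, j + k₀ ≤ k → a₂ ≤ c k - c j) :
    ∀ ρ : ℝ, 0 < ρ → ∀ α : ℝ, 0 < α → meanGC c α = ρ → ∀ t : ℝ,
      (∑' k : ℕ, (α ^ k / cfact c k) * Real.exp (t * (c k - α))) / Zfun c α
        ≤ Real.exp (α * a₁ * t ^ 2 * Real.exp (a₁ * |t|)) := by
  intro ρ _ α hα _ t
  have hc : ∀ k, 0 ≤ c k := fun k =>
    k.eq_zero_or_pos.elim (fun h => h ▸ hc0.ge) fun h => (hcpos k h).le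
  have hw := gcWeight_nonneg hcpos hα.le
  have hsum : ∀ r, Summable fun k => gcWeight c α k * exp (r * (c k - α)) :=
    summable_gcWeight_mul_exp hcpos hc (le_mul_of_abs_sub_succ_le hc0 hLG)
      (tendsto_atTop_of_le_sub hc ha₂ hM)
  have hpos : ∀ s, 0 < ∑' k, gcWeight c α k * exp (s * (c k - α)) := fun s =>
    (hsum s).tsum_pos (fun k => mul_nonneg (hw k) (exp_pos _).le) 0
      (by simp [gcWeight, cfact, exp_pos])
  have hbound : ∀ s ∈ Icc (-|t|) |t|,
      |∑' k, (c k - α) * (gcWeight c α k * exp (s * (c k - α)))|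
        ≤ α * (a₁ * |t| * exp (a₁ * |t|)) * ∑' k, gcWeight c α k * exp (s * (c k - α)) := by
    intro s hs
    have hs : |s| ≤ |t| := abs_le.2 hs
    have ha₁ : 0 ≤ a₁ := (abs_nonneg _).trans (hLG 0)
    have := (hpos s).le
    refine (abs_tsum_sub_mul_gcWeight_mul_exp_le hc0 hcpos hLG hα.le hsum s).trans ?_
    gcongr
  have hmgf := le_mul_exp_of_abs_deriv_le (fun s _ => hasDerivAt_tsum_mul_exp hw hsum s)
    (fun s _ => hpos s) hbound le_rfl
  have hZ : Zfun c α = ∑' k, gcWeight c α k * exp (0 * (c k - α)) := by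
    simp only [zero_mul, exp_zero, mul_one]
    rfl
  rw [div_le_iff₀ (hZ ▸ hpos 0), hZ]
  calc ∑' k, α ^ k / cfact c k * exp (t * (c k - α))
      ≤ (∑' k, gcWeight c α k * exp (0 * (c k - α))) *
          exp (α * (a₁ * |t| * exp (a₁ * |t|)) * |t|) := hmgf
    _ = _ := by rw [mul_comm, ← sq_abs t]; congr 2; ring

/-- Lemma 4.1: for every `ρ > 0` (with `α = α(ρ)` the corresponding fugacity, i.e. the
unique `α > 0` with mean `ρ`), `μ_ρ[e^{t(c-α)}] ≤ exp(α a₁ t² e^{a₁|t|})`. -/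
theorem statement16
    (c : ℕ → ℝ) (a₁ a₂ : ℝ) (k₀ : ℕ)
    (hc0 : c 0 = 0) (hcpos : ∀ n : ℕ, 0 < n → 0 < c n)
    (hLG : ∀ k : ℕ, |c (k + 1) - c k| ≤ a₁)
    (hk₀ : 0 < k₀) (ha₂ : 0 < a₂)
    (hM : ∀ j k : ℕ, j + k₀ ≤ k → a₂ ≤ c k - c j) :
    ∀ ρ : ℝ, 0 < ρ → ∀ α : ℝ, 0 < α → meanGC c α = ρ → ∀ t : ℝ,
      (∑' k : ℕ, (α ^ k / cfact c k) * Real.exp (t * (c k - α))) / Zfun c α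
        ≤ Real.exp (α * a₁ * t ^ 2 * Real.exp (a₁ * |t|)) :=
  statement16_general c a₁ a₂ k₀ hc0 hcpos hLG ha₂ hM
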